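/- arXiv:2202.13910 — 7 statements merged into one kernel-verified Lean document; each statement's English description precedes it below -/
import Mathlib

section
/- A total map f : E → E' of event structures is rigid (preserves causal dependency) if and only if for every configuration x of E and every configuration y of E' with y ⊆ f x, there exists a (necessarily unique) configuration z of E with z ⊆ x and f z = y. -/
universe u v w

/-- An event structure `(E, ≤, Con)`. -/
structure ES (E : Type u) where
  le : E → E → Prop
  le_refl : ∀ e, le e e
  le_trans : ∀ {a b c}, le a b → le b c → le a c
  le_antisymm : ∀ {a b}, le a b → le b a → a = b
  finitary : ∀ e, Set.Finite {e' | le e' e}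
  Con : Set E → Prop
  con_finite : ∀ {X}, Con X → X.Finite
  con_empty : Con ∅
  con_singleton : ∀ e, Con {e}
  con_mono : ∀ {X Y : Set E}, Y ⊆ X → Con X → Con Y
  con_extend : ∀ {X : Set E} {e e'}, Con X → le e e' → e' ∈ X → Con (insert e X)

namespace ES

variable {E : Type u}

/-- A configuration: consistent and down-closed. -/
def Config (S : ES E) (x : Set E) : Prop :=
  (∀ X : Set E, X ⊆ x → X.Finite → S.Con X) ∧
  ∀ ⦃e e' : E⦄, S.le e' e → e ∈ x → e' ∈ x

/-- The down-closure `[e]` of an event. -/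
def downCl (S : ES E) (e : E) : Set E := {e' | S.le e' e}

/-- The concurrency relation. -/
def Co (S : ES E) (e e' : E) : Prop :=
  S.Con {e, e'} ∧ ¬ S.le e e' ∧ ¬ S.le e' e

end ES

/-- The covering (immediate dependency) relation of an order. -/
def Covers {α : Type u} (le : α → α → Prop) (a b : α) : Prop :=
  a ≠ b ∧ le a b ∧ ∀ c, le a c → le c b → c = a ∨ c = b

/-- An event structure with polarity (`true` = Player `+`, `false` = Opponent `−`). -/
structure Game (E : Type u) extends ES E where
  pol : E → Bool

namespace Game

variable {E : Type u} {E' : Type v}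

def Config (G : Game E) : Set E → Prop := G.toES.Config

/-- The dual game: polarities reversed. -/
def dual (G : Game E) : Game E := { toES := G.toES, pol := fun e => !G.pol e }

/-- The Scott order: `y ⊑ x` iff `y⁻ ⊇ x⁻` and `y⁺ ⊆ x⁺`. -/
def ScottLE (G : Game E) (y x : Set E) : Prop :=
  {e | e ∈ x ∧ G.pol e = false} ⊆ {e | e ∈ y ∧ G.pol e = false} ∧
  {e | e ∈ y ∧ G.pol e = true} ⊆ {e | e ∈ x ∧ G.pol e = true}

/-- `x ⊆⁻ y` : inclusion with only Opponent events intervening. -/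
def subNeg (G : Game E) (x y : Set E) : Prop :=
  x ⊆ y ∧ ∀ e ∈ y, e ∉ x → G.pol e = false

/-- `x ⊆⁺ y` : inclusion with only Player events intervening. -/
def subPos (G : Game E) (x y : Set E) : Prop :=
  x ⊆ y ∧ ∀ e ∈ y, e ∉ x → G.pol e = true

/-- Race-freeness of a game. -/
def RaceFree (G : Game E) : Prop :=
  ∀ x y z, G.Config x → G.Config y → G.Config z →
    G.subNeg x y → G.subPos x z → G.Config (y ∪ z)

end Game

section StableFamilies

variable {E : Type u}

/-- A subset of a family is compatible when some member of the family bounds it. -/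
def FamCompatible (F : Set (Set E)) (Z : Set (Set E)) : Prop :=
  ∃ u ∈ F, ∀ z ∈ Z, z ⊆ u

/-- Stable families: complete, stable, finitary and coincidence-free. -/
def IsStableFamily (F : Set (Set E)) : Prop :=
  F.Nonempty ∧
  (∀ Z ⊆ F, (∀ W ⊆ Z, W.Finite → FamCompatible F W) → ⋃₀ Z ∈ F) ∧
  (∀ Z ⊆ F, Z.Nonempty → FamCompatible F Z → ⋂₀ Z ∈ F) ∧
  (∀ x ∈ F, ∀ e ∈ x, ∃ x₀ ∈ F, x₀.Finite ∧ e ∈ x₀ ∧ x₀ ⊆ x) ∧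
  (∀ x ∈ F, ∀ e ∈ x, ∀ e' ∈ x, e ≠ e' →
    ∃ x₀ ∈ F, x₀ ⊆ x ∧ (e ∈ x₀ ↔ e' ∉ x₀))

/-- The prime configuration `[e]_x` of `e` in `x`. -/
def primeConfig (F : Set (Set E)) (e : E) (x : Set E) : Set E :=
  ⋂₀ {y | y ∈ F ∧ e ∈ y ∧ y ⊆ x}

/-- The primes of a family. -/
def IsPrime (F : Set (Set E)) (p : Set E) : Prop :=
  ∃ e x, x ∈ F ∧ e ∈ x ∧ p = primeConfig F e x

end StableFamilies

section Par

variable {E : Type u} {E' : Type v}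

/-- Configurations of a parallel composition `A ∥ B` (componentwise). -/
def parConfig (A : Game E) (B : Game E') (w : Set (E ⊕ E')) : Prop :=
  A.Config (Sum.inl ⁻¹' w) ∧ B.Config (Sum.inr ⁻¹' w)

/-- Causal dependency of `A ∥ B` (componentwise). -/
def parLE (A : Game E) (B : Game E') : (E ⊕ E') → (E ⊕ E') → Prop :=
  Sum.LiftRel A.le B.le

/-- Polarity of `A⊥ ∥ B`. -/
def parPolL (A : Game E) (B : Game E') : E ⊕ E' → Bool
  | .inl a => !A.pol a
  | .inr b => B.pol b

end Par

/-
Rigidity makes `x ∩ f⁻¹ y` down-closed, so it is a configuration mapped onto `y`; local injectivity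
forces every `z ⊆ x` with `f z = y` to be that set. Conversely, given `e' ≤ e`, lift the configuration
`f [e] ∩ [f e]` along `f` inside `[e]`: the lift contains `e`, hence `e'`, so `f e' ≤ f e`.
-/

namespace ES

variable {E : Type u} {E' : Type v}

def IsRigid (S : ES E) (T : ES E') (f : E → E') : Prop :=
  ∀ e e', S.le e' e → T.le (f e') (f e)

theorem con_insert_of_subset_downCl (S : ES E) (e : E) {X : Set E} (hX : X.Finite)
    (hXe : X ⊆ S.downCl e) : S.Con (insert e X) := by
  induction X, hX using Set.Finite.induction_on with
  | empty => simpa using S.con_singleton e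
  | @insert a X _ _ ih =>
    have hcon : S.Con (insert e X) := ih ((Set.subset_insert a X).trans hXe)
    rw [Set.insert_comm]
    exact S.con_extend hcon (hXe (Set.mem_insert a X)) (Set.mem_insert e X)

theorem config_downCl (S : ES E) (e : E) : S.Config (S.downCl e) :=
  ⟨fun _ hX hfin => S.con_mono (Set.subset_insert e _) (S.con_insert_of_subset_downCl e hfin hX),
    fun _ _ hle he => S.le_trans hle he⟩

theorem Config.inter {S : ES E} {x y : Set E} (hx : S.Config x) (hy : S.Config y) :
    S.Config (x ∩ y) :=
  ⟨fun X hX => hx.1 X (hX.trans Set.inter_subset_left),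
    fun _ _ hle he => ⟨hx.2 hle he.1, hy.2 hle he.2⟩⟩

theorem Config.inter_preimage {S : ES E} {T : ES E'} {f : E → E'} (hf : IsRigid S T f)
    {x : Set E} {y : Set E'} (hx : S.Config x) (hy : T.Config y) :
    S.Config (x ∩ f ⁻¹' y) :=
  ⟨fun X hX => hx.1 X (hX.trans Set.inter_subset_left),
    fun _ _ hle he => ⟨hx.2 hle he.1, hy.2 (hf _ _ hle) he.2⟩⟩

theorem IsRigid.existsUnique_config_image_eq {S : ES E} {T : ES E'} {f : E → E'}
    (hf : IsRigid S T f) {x : Set E} (hx : S.Config x) (hinj : Set.InjOn f x)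
    {y : Set E'} (hy : T.Config y) (hyx : y ⊆ f '' x) :
    ∃! z, S.Config z ∧ z ⊆ x ∧ f '' z = y := by
  refine ⟨x ∩ f ⁻¹' y, ⟨hx.inter_preimage hf hy, Set.inter_subset_left, ?_⟩, ?_⟩
  · rw [Set.image_inter_preimage, Set.inter_eq_right.2 hyx]
  · rintro z ⟨-, hzx, rfl⟩
    rw [Set.inter_comm]
    exact (hinj.preimage_image_inter hzx).symm

theorem isRigid_of_forall_exists_config_image_eq {S : ES E} {T : ES E'} {f : E → E'}
    (himg : ∀ x, S.Config x → T.Config (f '' x))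
    (hinj : ∀ x, S.Config x → Set.InjOn f x)
    (hlift : ∀ x, S.Config x → x.Finite → ∀ y, T.Config y → y.Finite → y ⊆ f '' x →
      ∃ z, S.Config z ∧ z ⊆ x ∧ f '' z = y) :
    IsRigid S T f := by
  intro e e' hle
  have hx := S.config_downCl e
  have hfin : (S.downCl e).Finite := S.finitary e
  have hee : e ∈ S.downCl e := S.le_refl e
  obtain ⟨z, hz, hzx, hzy⟩ := hlift _ hx hfin (f '' S.downCl e ∩ T.downCl (f e))
    ((himg _ hx).inter (T.config_downCl (f e))) ((hfin.image f).subset Set.inter_subset_left)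
    Set.inter_subset_left
  have hez : e ∈ z := (hinj _ hx).mem_of_mem_image hzx hee
    (hzy ▸ ⟨Set.mem_image_of_mem f hee, T.le_refl (f e)⟩)
  have hfe' : f e' ∈ f '' z := Set.mem_image_of_mem f (hz.2 hle hez)
  exact (hzy ▸ hfe').2

end ES

/-- A total map of event structures is rigid iff it induces a discrete
fibration on (finite) configurations; the configuration `z` is necessarily
unique by local injectivity. -/
theorem stmt3 {E : Type u} {E' : Type v} (S : ES E) (T : ES E') (f : E → E')
    (himg : ∀ x, S.Config x → T.Config (f '' x))
    (hinj : ∀ x, S.Config x → ∀ e ∈ x, ∀ e' ∈ x, f e = f e' → e = e') :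
    (∀ e e', S.le e' e → T.le (f e') (f e)) ↔
    ∀ x, S.Config x → x.Finite → ∀ y, T.Config y → y.Finite → y ⊆ f '' x →
      ∃! z, S.Config z ∧ z ⊆ x ∧ f '' z = y :=
  ⟨fun hf x hx _ _ hy _ hyx => ES.IsRigid.existsUnique_config_image_eq hf hx (hinj x hx) hy hyx,
    fun hfib => ES.isRigid_of_forall_exists_config_image_eq himg hinj
      fun x hx hxfin y hy hyfin hyx => (hfib x hx hxfin y hy hyfin hyx).exists⟩
end

section
/- For any stable family F, the structure Pr(F) with events the prime configurations [e]_x, causal order given by inclusion, and a set of primes consistent iff its union lies in F, is an event structure; moreover the map sending a configuration y of Pr(F) to ⋃y is an order isomorphism from the configurations of Pr(F) ordered by inclusion to (F, ⊆), with inverse x ↦ { [e]_x : e ∈ x }. -/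
/-!
By stability, a prime `[e]_x` does not depend on its ambient configuration: `[e]_x = [e]_v`
whenever `[e]_x ⊆ v ∈ F`. Hence the primes below `x ∈ F` are exactly the `[e]_x` with `e ∈ x`,
and, dually, a configuration `y` of `Pr(F)` is exactly the set of primes below `⋃ y`, which lies
in `F` by completeness. The two maps `y ↦ ⋃ y` and `x ↦ {[e]_x : e ∈ x}` are therefore
monotone and mutually inverse.
-/

universe u v w

namespace IsStableFamily

variable {E : Type u} {F : Set (Set E)}

theorem sUnion_mem_of_bounded (hF : IsStableFamily F) {Y : Set (Set E)} (hY : Y ⊆ F)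
    {u : Set E} (hu : u ∈ F) (hYu : ∀ y ∈ Y, y ⊆ u) : ⋃₀ Y ∈ F :=
  hF.2.1 Y hY fun _ hW _ => ⟨u, hu, fun z hz => hYu z (hW hz)⟩

theorem empty_mem (hF : IsStableFamily F) : ∅ ∈ F := by
  obtain ⟨u, hu⟩ := hF.1
  simpa using hF.sUnion_mem_of_bounded (Set.empty_subset F) hu (by simp)

theorem inter_mem (hF : IsStableFamily F) {x y v : Set E} (hx : x ∈ F) (hy : y ∈ F)
    (hv : v ∈ F) (hxv : x ⊆ v) (hyv : y ⊆ v) : x ∩ y ∈ F := by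
  rw [← Set.sInter_pair]
  exact hF.2.2.1 _ (Set.pair_subset hx hy) (Set.insert_nonempty _ _)
    ⟨v, hv, by simp [hxv, hyv]⟩

end IsStableFamily

section PrimeConfig

variable {E : Type u} {F : Set (Set E)} {e : E} {x y : Set E}

theorem mem_primeConfig : e ∈ primeConfig F e x :=
  Set.mem_sInter.2 fun _ hy => hy.2.1

theorem primeConfig_subset_of_mem_of_subset (hy : y ∈ F) (hey : e ∈ y) (hyx : y ⊆ x) :
    primeConfig F e x ⊆ y :=
  Set.sInter_subset_of_mem ⟨hy, hey, hyx⟩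

theorem primeConfig_subset (hx : x ∈ F) (he : e ∈ x) : primeConfig F e x ⊆ x :=
  primeConfig_subset_of_mem_of_subset hx he subset_rfl

theorem primeConfig_mem (hF : IsStableFamily F) (hx : x ∈ F) (he : e ∈ x) :
    primeConfig F e x ∈ F :=
  hF.2.2.1 _ (fun _ hy => hy.1) ⟨x, hx, he, subset_rfl⟩ ⟨x, hx, fun _ hy => hy.2.2⟩

theorem primeConfig_eq_of_subset (hF : IsStableFamily F) (hx : x ∈ F) (he : e ∈ x)
    {v : Set E} (hv : v ∈ F) (hsub : primeConfig F e x ⊆ v) :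
    primeConfig F e x = primeConfig F e v := by
  have hp := primeConfig_mem hF hx he
  refine (Set.subset_sInter ?_).antisymm
    (primeConfig_subset_of_mem_of_subset hp mem_primeConfig hsub)
  rintro y ⟨hy, hey, hyv⟩
  -- By stability `y ∩ [e]_x ∈ F`; it contains `e` and lies below `x`, so it contains `[e]_x`.
  have hmeet : y ∩ primeConfig F e x ∈ F := hF.inter_mem hy hp hv hyv hsub
  exact (primeConfig_subset_of_mem_of_subset hmeet ⟨hey, mem_primeConfig⟩
    (Set.inter_subset_right.trans (primeConfig_subset hx he))).trans Set.inter_subset_left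

end PrimeConfig

namespace IsPrime

variable {E : Type u} {F : Set (Set E)} {p : Set E}

theorem mem_family (hF : IsStableFamily F) (hp : IsPrime F p) : p ∈ F := by
  obtain ⟨e, x, hx, he, rfl⟩ := hp
  exact primeConfig_mem hF hx he

theorem finite (hF : IsStableFamily F) (hp : IsPrime F p) : p.Finite := by
  obtain ⟨e, x, hx, he, rfl⟩ := hp
  obtain ⟨x₀, hx₀, hx₀fin, hex₀, hx₀x⟩ := hF.2.2.2.1 x hx e he
  exact hx₀fin.subset (primeConfig_subset_of_mem_of_subset hx₀ hex₀ hx₀x)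

theorem exists_eq_primeConfig (hF : IsStableFamily F) (hp : IsPrime F p) {v : Set E}
    (hv : v ∈ F) (hpv : p ⊆ v) : ∃ e ∈ p, p = primeConfig F e v := by
  obtain ⟨e, x, hx, he, rfl⟩ := hp
  exact ⟨e, mem_primeConfig, primeConfig_eq_of_subset hF hx he hv hpv⟩

end IsPrime

def primesOf {E : Type u} (F : Set (Set E)) (x : Set E) : Set {p : Set E // IsPrime F p} :=
  {p | ∃ e ∈ x, p.1 = primeConfig F e x}

namespace IsStableFamily

variable {E : Type u} {F : Set (Set E)}

theorem sUnion_image_val_mem_of_bounded (hF : IsStableFamily F)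
    {Z : Set {p : Set E // IsPrime F p}} {u : Set E} (hu : u ∈ F) (hZu : ∀ p ∈ Z, p.1 ⊆ u) :
    ⋃₀ (Subtype.val '' Z) ∈ F :=
  hF.sUnion_mem_of_bounded (by rintro _ ⟨p, -, rfl⟩; exact p.2.mem_family hF) hu
    (by rintro _ ⟨p, hp, rfl⟩; exact hZu p hp)

def primeES (hF : IsStableFamily F) : ES {p : Set E // IsPrime F p} where
  le p q := p.1 ⊆ q.1
  le_refl _ := subset_rfl
  le_trans h₁ h₂ := h₁.trans h₂
  le_antisymm h₁ h₂ := Subtype.ext (h₁.antisymm h₂)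
  finitary p := ((p.2.finite hF).finite_subsets).preimage Subtype.val_injective.injOn
  Con Z := Z.Finite ∧ ⋃₀ (Subtype.val '' Z) ∈ F
  con_finite h := h.1
  con_empty := ⟨Set.finite_empty, by simpa using hF.empty_mem⟩
  con_singleton p := ⟨Set.finite_singleton p, by simpa using p.2.mem_family hF⟩
  con_mono hYX hX := ⟨hX.1.subset hYX, hF.sUnion_image_val_mem_of_bounded hX.2
    fun _ hp => Set.subset_sUnion_of_mem ⟨_, hYX hp, rfl⟩⟩
  con_extend {X} p q hX hpq hq := ⟨hX.1.insert p, by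
    have hbound : ∀ r ∈ insert p X, r.1 ⊆ ⋃₀ (Subtype.val '' X) := by
      rintro r (rfl | hr)
      · exact hpq.trans (Set.subset_sUnion_of_mem ⟨q, hq, rfl⟩)
      · exact Set.subset_sUnion_of_mem ⟨r, hr, rfl⟩
    exact hF.sUnion_image_val_mem_of_bounded hX.2 hbound⟩

variable {y : Set {p : Set E // IsPrime F p}}

theorem sUnion_mem_of_config (hF : IsStableFamily F) (hy : hF.primeES.Config y) :
    ⋃₀ (Subtype.val '' y) ∈ F := by
  refine hF.2.1 _ (by rintro _ ⟨p, -, rfl⟩; exact p.2.mem_family hF) fun W hW hWfin => ?_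
  obtain ⟨W₀, hW₀y, rfl⟩ := Set.subset_image_iff.1 hW
  have hW₀ := hy.1 W₀ hW₀y (hWfin.of_finite_image Subtype.val_injective.injOn)
  exact ⟨_, hW₀.2, fun _ hz => Set.subset_sUnion_of_mem hz⟩

theorem mem_config_iff (hF : IsStableFamily F) (hy : hF.primeES.Config y)
    {p : {p : Set E // IsPrime F p}} : p ∈ y ↔ p.1 ⊆ ⋃₀ (Subtype.val '' y) := by
  refine ⟨fun hp => Set.subset_sUnion_of_mem ⟨p, hp, rfl⟩, fun hpy => ?_⟩
  obtain ⟨e, hep, hpe⟩ := p.2.exists_eq_primeConfig hF (hF.sUnion_mem_of_config hy) hpy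
  obtain ⟨_, ⟨q, hq, rfl⟩, heq⟩ := hpy hep
  have hpq : p.1 ⊆ q.1 := hpe ▸
    primeConfig_subset_of_mem_of_subset (q.2.mem_family hF) heq
      (Set.subset_sUnion_of_mem ⟨q, hq, rfl⟩)
  exact hy.2 hpq hq

theorem mem_primesOf_iff (hF : IsStableFamily F) {x : Set E} (hx : x ∈ F)
    {p : {p : Set E // IsPrime F p}} : p ∈ primesOf F x ↔ p.1 ⊆ x := by
  refine ⟨fun ⟨e, he, hpe⟩ => hpe ▸ primeConfig_subset hx he, fun hpx => ?_⟩
  obtain ⟨e, hep, hpe⟩ := p.2.exists_eq_primeConfig hF hx hpx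
  exact ⟨e, hpx hep, hpe⟩

theorem primesOf_config (hF : IsStableFamily F) {x : Set E} (hx : x ∈ F) :
    hF.primeES.Config (primesOf F x) := by
  refine ⟨fun X hX hXfin => ⟨hXfin, hF.sUnion_image_val_mem_of_bounded hx
    fun p hp => (hF.mem_primesOf_iff hx).1 (hX hp)⟩, fun p q hqp hp => ?_⟩
  exact (hF.mem_primesOf_iff hx).2 (hqp.trans ((hF.mem_primesOf_iff hx).1 hp))

theorem sUnion_primesOf (hF : IsStableFamily F) {x : Set E} (hx : x ∈ F) :
    ⋃₀ (Subtype.val '' primesOf F x) = x := by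
  refine (Set.sUnion_subset ?_).antisymm fun e he => ?_
  · rintro _ ⟨p, hp, rfl⟩
    exact (hF.mem_primesOf_iff hx).1 hp
  · exact ⟨_, ⟨⟨_, e, x, hx, he, rfl⟩, ⟨e, he, rfl⟩, rfl⟩, mem_primeConfig⟩

theorem primesOf_sUnion (hF : IsStableFamily F) (hy : hF.primeES.Config y) :
    primesOf F (⋃₀ (Subtype.val '' y)) = y := by
  ext p
  rw [hF.mem_primesOf_iff (hF.sUnion_mem_of_config hy), hF.mem_config_iff hy]

end IsStableFamily

/-- `Pr(F)` is an event structure, whose configurations ordered by inclusion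
are order isomorphic to `(F, ⊆)` via `y ↦ ⋃ y`, with inverse
`x ↦ { [e]_x : e ∈ x }`. -/
theorem stmt5 {E : Type u} {F : Set (Set E)} (hF : IsStableFamily F) :
    ∃ P : ES {p : Set E // IsPrime F p},
      (∀ p q, P.le p q ↔ p.1 ⊆ q.1) ∧
      (∀ Z, P.Con Z ↔ Z.Finite ∧ ⋃₀ (Subtype.val '' Z) ∈ F) ∧
      (∀ y, P.Config y → ⋃₀ (Subtype.val '' y) ∈ F) ∧
      (∀ y y', P.Config y → P.Config y' →
        (y ⊆ y' ↔ ⋃₀ (Subtype.val '' y) ⊆ ⋃₀ (Subtype.val '' y'))) ∧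
      (∀ x, x ∈ F →
        P.Config {p : {p : Set E // IsPrime F p} | ∃ e ∈ x, p.1 = primeConfig F e x} ∧
        ⋃₀ (Subtype.val '' {p : {p : Set E // IsPrime F p} | ∃ e ∈ x, p.1 = primeConfig F e x}) = x) ∧
      (∀ y, P.Config y →
        {p : {p : Set E // IsPrime F p} |
          ∃ e ∈ ⋃₀ (Subtype.val '' y), p.1 = primeConfig F e (⋃₀ (Subtype.val '' y))} = y) := by
  refine ⟨hF.primeES, fun _ _ => Iff.rfl, fun _ => Iff.rfl, fun _ => hF.sUnion_mem_of_config,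
    fun y y' _ hy' => ⟨fun h => Set.sUnion_subset_sUnion (Set.image_mono h), fun h p hp => ?_⟩,
    fun x hx => ⟨hF.primesOf_config hx, hF.sUnion_primesOf hx⟩,
    fun _ => hF.primesOf_sUnion⟩
  exact (hF.mem_config_iff hy').2 ((Set.subset_sUnion_of_mem (Set.mem_image_of_mem _ hp)).trans h)
end

section
/- If y_i ⊑_B y'_i for all i in a nonempty index set I, then ⋂_{i∈I} y_i ⊑_B ⋂_{i∈I} y'_i; and if moreover both families {y_i} and {y'_i} are compatible in the configurations of B (each has an upper bound that is a configuration), then ⋃_{i∈I} y_i ⊑_B ⋃_{i∈I} y'_i. -/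
universe u v w

/-- The Scott order is preserved by intersections of nonempty families and,
for compatible families, by unions. -/
theorem stmt8 {E : Type u} (B : Game E) {ι : Type v} [Nonempty ι]
    (y y' : ι → Set E) (hy : ∀ i, B.Config (y i)) (hy' : ∀ i, B.Config (y' i))
    (h : ∀ i, B.ScottLE (y i) (y' i)) :
    B.ScottLE (⋂ i, y i) (⋂ i, y' i) ∧
    ((∃ u, B.Config u ∧ ∀ i, y i ⊆ u) → (∃ u, B.Config u ∧ ∀ i, y' i ⊆ u) →
      B.ScottLE (⋃ i, y i) (⋃ i, y' i)) := by
  constructor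
  · constructor
    · intro e he
      exact ⟨Set.mem_iInter.2 fun i => ((h i).1 ⟨Set.mem_iInter.1 he.1 i, he.2⟩).1, he.2⟩
    · intro e he
      exact ⟨Set.mem_iInter.2 fun i => ((h i).2 ⟨Set.mem_iInter.1 he.1 i, he.2⟩).1, he.2⟩
  · intro _ _
    constructor
    · intro e he
      obtain ⟨i, hi⟩ := Set.mem_iUnion.1 he.1
      exact ⟨Set.mem_iUnion.2 ⟨i, ((h i).1 ⟨hi, he.2⟩).1⟩, he.2⟩
    · intro e he
      obtain ⟨i, hi⟩ := Set.mem_iUnion.1 he.1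
      exact ⟨Set.mem_iUnion.2 ⟨i, ((h i).2 ⟨hi, he.2⟩).1⟩, he.2⟩
end

section
/- Configurations of copycat are characterized by the Scott order: for a game A and configurations x of A⊥ and y of A, the set x ∥ y is a configuration of the copycat event structure CC_A if and only if y ⊑_A x. -/
universe u v w

section Copycat

variable {E : Type u}

/-- Generating relation for the causal dependency of copycat `CC_A`:
the order of `A⊥ ∥ A` together with `c̄ ≤ c` for each positive `c`. -/
def ccGen (G : Game E) : (E ⊕ E) → (E ⊕ E) → Prop
  | .inl a, .inl b => G.le a b
  | .inr a, .inr b => G.le a b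
  | .inl a, .inr b => a = b ∧ G.pol a = true
  | .inr a, .inl b => a = b ∧ G.pol a = false

/-- Causal dependency of copycat. -/
def ccLE (G : Game E) : (E ⊕ E) → (E ⊕ E) → Prop :=
  Relation.ReflTransGen (ccGen G)

/-- Consistency in `A⊥ ∥ A` (componentwise). -/
def parConE (G : Game E) (X : Set (E ⊕ E)) : Prop :=
  G.Con (Sum.inl ⁻¹' X) ∧ G.Con (Sum.inr ⁻¹' X)

/-- Consistency in copycat: the down-closure is consistent in `A⊥ ∥ A`. -/
def ccCon (G : Game E) (X : Set (E ⊕ E)) : Prop :=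
  X.Finite ∧ parConE G {d | ∃ c ∈ X, ccLE G d c}

/-- Configurations of copycat. -/
def ccConfig (G : Game E) (x : Set (E ⊕ E)) : Prop :=
  (∀ X ⊆ x, X.Finite → ccCon G X) ∧
  ∀ ⦃c d : E ⊕ E⦄, ccLE G d c → c ∈ x → d ∈ x

end Copycat

lemma ccGen_proj {E : Type u} {G : Game E} {d c : E ⊕ E} (h : ccGen G d c) :
    G.le (Sum.elim id id d) (Sum.elim id id c) := by
  cases d <;> cases c <;> simp [ccGen] at h <;>
    first
      | exact h
      | (cases h.1; exact G.le_refl _)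

lemma ccLE_proj {E : Type u} {G : Game E} {d c : E ⊕ E} (h : ccLE G d c) :
    G.le (Sum.elim id id d) (Sum.elim id id c) := by
  induction h with
  | refl => exact G.le_refl _
  | tail _ h2 ih => exact G.le_trans ih (ccGen_proj h2)

lemma ccLE_finite {E : Type u} (G : Game E) (c : E ⊕ E) :
    Set.Finite {d | ccLE G d c} := by
  apply Set.Finite.subset
    (Set.Finite.union ((G.finitary (Sum.elim id id c)).image Sum.inl)
      ((G.finitary (Sum.elim id id c)).image Sum.inr))
  intro d hd
  have := ccLE_proj hd
  cases d with
  | inl a => exact Or.inl ⟨a, this, rfl⟩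
  | inr a => exact Or.inr ⟨a, this, rfl⟩

/-- Configurations of copycat are characterized by the Scott order:
`x ∥ y ∈ C∞(CC_A)` iff `y ⊑_A x`. -/
theorem stmt9 {E : Type u} (G : Game E) (x y : Set E)
    (hx : G.Config x) (hy : G.Config y) :
    ccConfig G (Sum.inl '' x ∪ Sum.inr '' y) ↔ G.ScottLE y x := by
  set w : Set (E ⊕ E) := Sum.inl '' x ∪ Sum.inr '' y with hw
  have hmeml : ∀ a : E, Sum.inl a ∈ w ↔ a ∈ x := by
    intro a; simp [hw]
  have hmemr : ∀ a : E, Sum.inr a ∈ w ↔ a ∈ y := by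
    intro a; simp [hw]
  constructor
  · rintro ⟨_, hdown⟩
    constructor
    · rintro e ⟨hex, hpol⟩
      have : ccGen G (Sum.inr e) (Sum.inl e) := ⟨rfl, hpol⟩
      have := hdown (Relation.ReflTransGen.single this) ((hmeml e).2 hex)
      exact ⟨(hmemr e).1 this, hpol⟩
    · rintro e ⟨hey, hpol⟩
      have : ccGen G (Sum.inl e) (Sum.inr e) := ⟨rfl, hpol⟩
      have := hdown (Relation.ReflTransGen.single this) ((hmemr e).2 hey)
      exact ⟨(hmeml e).1 this, hpol⟩
  · rintro ⟨hneg, hpos⟩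
    have hstep : ∀ {d c : E ⊕ E}, ccGen G d c → c ∈ w → d ∈ w := by
      intro d c h hc
      cases d with
      | inl a => cases c with
        | inl b => exact (hmeml a).2 (hx.2 h ((hmeml b).1 hc))
        | inr b =>
          obtain ⟨rfl, hpol⟩ := h
          exact (hmeml a).2 (hpos ⟨(hmemr a).1 hc, hpol⟩).1
      | inr a => cases c with
        | inl b =>
          obtain ⟨rfl, hpol⟩ := h
          exact (hmemr a).2 (hneg ⟨(hmeml a).1 hc, hpol⟩).1
        | inr b => exact (hmemr a).2 (hy.2 h ((hmemr b).1 hc))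
    have hdown : ∀ ⦃c d : E ⊕ E⦄, ccLE G d c → c ∈ w → d ∈ w := by
      intro c d h hc
      induction h using Relation.ReflTransGen.head_induction_on with
      | refl => exact hc
      | head h1 _ ih => exact hstep h1 ih
    refine ⟨?_, hdown⟩
    intro X hXw hXfin
    set Y : Set (E ⊕ E) := {d | ∃ c ∈ X, ccLE G d c} with hY
    have hYfin : Y.Finite := by
      have : Y = ⋃ c ∈ X, {d | ccLE G d c} := by
        ext d; simp [hY]
      rw [this]
      exact Set.Finite.biUnion hXfin (fun c _ => ccLE_finite G c)
    have hYw : Y ⊆ w := by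
      rintro d ⟨c, hcX, hdc⟩
      exact hdown hdc (hXw hcX)
    exact ⟨hXfin,
      hx.1 _ (fun a ha => (hmeml a).1 (hYw ha))
        (hYfin.preimage (Sum.inl_injective.injOn)),
      hy.1 _ (fun a ha => (hmemr a).1 (hYw ha))
        (hYfin.preimage (Sum.inr_injective.injOn))⟩
end

section
/- Given an affine-stable map f from game A to game B, the family F := { x ∥ y ∈ C∞(A⊥ ∥ B) : y ⊑_B f(x) } is a stable family. -/
universe u v w

section AffineStable

variable {E : Type u} {E' : Type v} {E'' : Type w}

/-- Affine-stable maps between games. -/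
def IsAffineStable (A : Game E) (B : Game E') (f : Set E → Set E') : Prop :=
  (∀ x, A.Config x → B.Config (f x)) ∧
  (∀ x y, A.Config x → A.Config y → A.subNeg x y → B.subNeg (f x) (f y)) ∧
  (∀ x y, A.Config x → A.Config y → A.subPos x y → B.subPos (f x) (f y)) ∧
  (∀ x, A.Config x → ∀ b ∈ f x, B.pol b = true →
    ∃ x₀, A.Config x₀ ∧ x₀.Finite ∧ x₀ ⊆ x ∧ b ∈ f x₀) ∧
  (∀ x, A.Config x → x.Finite → {b | b ∈ f x ∧ B.pol b = false}.Finite) ∧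
  (∀ I : Set (Set E), (∀ x ∈ I, A.Config x) →
    (∃ u, A.Config u ∧ ∀ x ∈ I, x ⊆ u) →
    B.subPos (⋃₀ (f '' I)) (f (⋃₀ I))) ∧
  (∀ I : Set (Set E), I.Nonempty → (∀ x ∈ I, A.Config x) →
    (∃ u, A.Config u ∧ ∀ x ∈ I, x ⊆ u) →
    B.subNeg (f (⋂₀ I)) (⋂₀ (f '' I)))

/-- The stable family `{ x ∥ y : y ⊑_B f(x) }` of an affine-stable map. -/
def affFamily (A : Game E) (B : Game E') (f : Set E → Set E') :
    Set (Set (E ⊕ E')) :=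
  {w | ∃ x y, A.Config x ∧ B.Config y ∧ B.ScottLE y (f x) ∧
    w = Sum.inl '' x ∪ Sum.inr '' y}

end AffineStable

section AuxStmt10

variable {E : Type u} {E' : Type v}

private lemma esConfig_subset {S : ES E} {x x' : Set E} (hx : S.Config x) (hsub : x' ⊆ x)
    (hdc : ∀ ⦃e e' : E⦄, S.le e' e → e ∈ x' → e' ∈ x') : S.Config x' :=
  ⟨fun X hX hXf => hx.1 X (hX.trans hsub) hXf, hdc⟩

private lemma esConfig_empty (S : ES E) : S.Config ∅ :=
  ⟨fun X hX _ => by rw [Set.subset_empty_iff] at hX; rw [hX]; exact S.con_empty,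
   fun _ _ _ h => absurd h (Set.notMem_empty _)⟩

private lemma exists_maximal_above {S : ES E} {Y : Set E} (hY : Y.Finite) {e : E} (he : e ∈ Y) :
    ∃ g ∈ Y, S.le e g ∧ ∀ c ∈ Y, S.le g c → c = g := by
  have key : ∀ n : ℕ, ∀ e ∈ Y, ({c ∈ Y | S.le e c}).ncard ≤ n →
      ∃ g ∈ Y, S.le e g ∧ ∀ c ∈ Y, S.le g c → c = g := by
    intro n
    induction n with
    | zero =>
      intro e he hc
      exfalso
      have hmem : e ∈ {c ∈ Y | S.le e c} := ⟨he, S.le_refl e⟩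
      have hfin : ({c ∈ Y | S.le e c}).Finite := hY.subset (fun c hc => hc.1)
      have hpos := (Set.ncard_pos hfin).mpr ⟨e, hmem⟩
      omega
    | succ n ih =>
      intro e he hc
      by_cases hmax : ∀ c ∈ Y, S.le e c → c = e
      · exact ⟨e, he, S.le_refl e, hmax⟩
      · push_neg at hmax
        obtain ⟨c₁, hc₁Y, hle₁, hne₁⟩ := hmax
        have hcard : ({c ∈ Y | S.le c₁ c}).ncard ≤ n := by
          have hsub : {c ∈ Y | S.le c₁ c} ⊂ {c ∈ Y | S.le e c} := by
            rw [Set.ssubset_def]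
            constructor
            · rintro c ⟨hcY, hlc⟩; exact ⟨hcY, S.le_trans hle₁ hlc⟩
            · intro hcon
              have hmem : c₁ ∈ {c ∈ Y | S.le c₁ c} := ⟨hc₁Y, S.le_refl c₁⟩
              have : e ∈ {c ∈ Y | S.le c₁ c} := by
                by_contra hno
                exact hno (hcon ⟨he, S.le_refl e⟩) |>.elim
              exact hne₁ (S.le_antisymm hle₁ this.2).symm
          have hfin : ({c ∈ Y | S.le e c}).Finite := hY.subset fun c hc => hc.1
          have := Set.ncard_lt_ncard hsub hfin
          omega
        obtain ⟨g, hgY, hge, hgmax⟩ := ih c₁ hc₁Y hcard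
        exact ⟨g, hgY, S.le_trans hle₁ hge, hgmax⟩
  exact key _ e he le_rfl

variable {A : Game E} {B : Game E'} {f : Set E → Set E'}

private lemma mem_aff_iff {w : Set (E ⊕ E')} :
    w ∈ affFamily A B f ↔
      A.Config (Sum.inl ⁻¹' w) ∧ B.Config (Sum.inr ⁻¹' w) ∧
      (∀ b, b ∈ f (Sum.inl ⁻¹' w) → B.pol b = false → b ∈ Sum.inr ⁻¹' w) ∧
      (∀ b, b ∈ Sum.inr ⁻¹' w → B.pol b = true → b ∈ f (Sum.inl ⁻¹' w)) := by
  constructor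
  · rintro ⟨x, y, hx, hy, hsc, rfl⟩
    have hxe : Sum.inl ⁻¹' (Sum.inl '' x ∪ Sum.inr '' y) = x := by ext a; simp
    have hye : Sum.inr ⁻¹' (Sum.inl '' x ∪ Sum.inr '' y) = y := by ext b; simp
    rw [hxe, hye]
    exact ⟨hx, hy, fun b hb hp => (hsc.1 ⟨hb, hp⟩).1, fun b hb hp => (hsc.2 ⟨hb, hp⟩).1⟩
  · rintro ⟨hx, hy, h1, h2⟩
    refine ⟨Sum.inl ⁻¹' w, Sum.inr ⁻¹' w, hx, hy,
      ⟨fun b hb => ⟨h1 b hb.1 hb.2, hb.2⟩, fun b hb => ⟨h2 b hb.1 hb.2, hb.2⟩⟩, ?_⟩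
    ext e0; cases e0 <;> simp

private lemma aff_mono (hf : IsAffineStable A B f) {xs xt : Set E}
    (hxs : A.Config xs) (hxt : A.Config xt) (hsub : xs ⊆ xt) : f xs ⊆ f xt := by
  have h := hf.2.2.2.2.2.1 {xs, xt}
    (by
      intro z hz
      rcases Set.mem_insert_iff.mp hz with rfl | hz
      · exact hxs
      · rw [Set.mem_singleton_iff] at hz; subst hz; exact hxt)
    ⟨xt, hxt, by
      intro z hz
      rcases Set.mem_insert_iff.mp hz with rfl | hz
      · exact hsub
      · rw [Set.mem_singleton_iff] at hz; subst hz; exact subset_rfl⟩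
  have hU : ⋃₀ ({xs, xt} : Set (Set E)) = xt := by
    rw [Set.sUnion_pair]; exact Set.union_eq_self_of_subset_left hsub
  rw [hU] at h
  intro b hb
  exact (h.1 ⟨f xs, ⟨xs, Set.mem_insert _ _, rfl⟩, hb⟩ : b ∈ f xt)

private lemma f_empty_pos (hf : IsAffineStable A B f) : ∀ b ∈ f ∅, B.pol b = true := by
  have h := hf.2.2.2.2.2.1 ∅ (fun x hx => absurd hx (Set.notMem_empty x))
    ⟨∅, esConfig_empty A.toES, fun x hx => absurd hx (Set.notMem_empty x)⟩
  rw [Set.image_empty, Set.sUnion_empty, Set.sUnion_empty] at h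
  exact fun b hb => h.2 b hb (Set.notMem_empty b)

end AuxStmt10
section AuxStmt10b

variable {E : Type u} {E' : Type v}

/-- Down-closure of the negative part of `f x₀`. -/
private def negDC (B : Game E') (f : Set E → Set E') (x₀ : Set E) : Set E' :=
  ⋃ d ∈ {b ∈ f x₀ | B.pol b = false}, {c | B.le c d}

variable {A : Game E} {B : Game E'} {f : Set E → Set E'}

private lemma build_member (hf : IsAffineStable A B f) {w : Set (E ⊕ E')}
    (hw : w ∈ affFamily A B f) {x₀ : Set E} {t : Set E'}
    (hx₀c : A.Config x₀) (hx₀s : x₀ ⊆ Sum.inl ⁻¹' w) (hx₀f : x₀.Finite)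
    (hts : t ⊆ Sum.inr ⁻¹' w) (htf : t.Finite)
    (htdc : ∀ ⦃c d : E'⦄, B.le c d → d ∈ t → c ∈ t)
    (htp : ∀ c ∈ t, B.pol c = true → c ∈ f x₀) :
    (Sum.inl '' x₀ ∪ Sum.inr '' (t ∪ negDC B f x₀)) ∈ affFamily A B f ∧
      (Sum.inl '' x₀ ∪ Sum.inr '' (t ∪ negDC B f x₀)) ⊆ w ∧
      (Sum.inl '' x₀ ∪ Sum.inr '' (t ∪ negDC B f x₀)).Finite := by
  obtain ⟨hxw, hyw, hw1, hw2⟩ := mem_aff_iff.mp hw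
  have hfx₀sub : f x₀ ⊆ f (Sum.inl ⁻¹' w) := aff_mono hf hx₀c hxw hx₀s
  have hnegmem : ∀ {c : E'}, c ∈ negDC B f x₀ →
      ∃ d, (d ∈ f x₀ ∧ B.pol d = false) ∧ B.le c d := by
    intro c hc
    obtain ⟨d, hd, hcd⟩ := Set.mem_iUnion₂.mp hc
    exact ⟨d, hd, hcd⟩
  have hy₀sub : t ∪ negDC B f x₀ ⊆ Sum.inr ⁻¹' w := by
    rintro c (hc | hc)
    · exact hts hc
    · obtain ⟨d, hd, hcd⟩ := hnegmem hc
      have hdw : d ∈ Sum.inr ⁻¹' w := hw1 d (hfx₀sub hd.1) hd.2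
      exact hyw.2 hcd hdw
  have hy₀c : B.Config (t ∪ negDC B f x₀) := by
    refine esConfig_subset hyw hy₀sub ?_
    rintro c' c hcc (hc | hc)
    · exact Or.inl (htdc hcc hc)
    · obtain ⟨d, hd, hcd⟩ := hnegmem hc
      exact Or.inr (Set.mem_iUnion₂.mpr ⟨d, hd, B.le_trans hcc hcd⟩)
  refine ⟨⟨x₀, t ∪ negDC B f x₀, hx₀c, hy₀c, ⟨?_, ?_⟩, rfl⟩, ?_, ?_⟩
  · rintro b ⟨hbf, hbp⟩
    exact ⟨Or.inr (Set.mem_iUnion₂.mpr ⟨b, ⟨hbf, hbp⟩, B.le_refl b⟩), hbp⟩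
  · rintro c ⟨hc, hcp⟩
    refine ⟨?_, hcp⟩
    rcases hc with hc | hc
    · exact htp c hc hcp
    · obtain ⟨d, hd, hcd⟩ := hnegmem hc
      exact (hf.1 x₀ hx₀c).2 hcd hd.1
  · apply Set.union_subset
    · exact Set.image_subset_iff.mpr hx₀s
    · exact Set.image_subset_iff.mpr hy₀sub
  · refine (hx₀f.image _).union ((htf.union ?_).image _)
    exact Set.Finite.biUnion (hf.2.2.2.2.1 x₀ hx₀c hx₀f) (fun d _ => B.finitary d)

private lemma peel (hf : IsAffineStable A B f) {v : Set (E ⊕ E')}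
    (hv : v ∈ affFamily A B f) (hvfin : v.Finite) (hvne : v.Nonempty) :
    ∃ g ∈ v, v \ {g} ∈ affFamily A B f := by
  obtain ⟨hm, hY, h1, h2⟩ := mem_aff_iff.mp hv
  have hYfin : (Sum.inr ⁻¹' v : Set E').Finite := hvfin.preimage Sum.inr_injective.injOn
  have hmfin : (Sum.inl ⁻¹' v : Set E).Finite := hvfin.preimage Sum.inl_injective.injOn
  by_cases hcase : ∃ g ∈ Sum.inr ⁻¹' v, (∀ c ∈ Sum.inr ⁻¹' v, B.le g c → c = g) ∧
      ¬(g ∈ f (Sum.inl ⁻¹' v) ∧ B.pol g = false)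
  · obtain ⟨g, hgY, hgmax, hgn⟩ := hcase
    refine ⟨Sum.inr g, hgY, ?_⟩
    refine ⟨Sum.inl ⁻¹' v, (Sum.inr ⁻¹' v) \ {g}, hm, ?_, ⟨?_, ?_⟩, ?_⟩
    · refine esConfig_subset hY Set.diff_subset ?_
      intro c c' hcc hc
      refine ⟨hY.2 hcc hc.1, ?_⟩
      intro hc'g
      rw [Set.mem_singleton_iff] at hc'g; subst hc'g
      exact hc.2 (by rw [Set.mem_singleton_iff]; exact hgmax c hc.1 hcc)
    · rintro b ⟨hbf, hbp⟩
      refine ⟨⟨h1 b hbf hbp, ?_⟩, hbp⟩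
      intro hbg; rw [Set.mem_singleton_iff] at hbg; subst hbg
      exact hgn ⟨hbf, hbp⟩
    · rintro c ⟨hc, hcp⟩
      exact ⟨h2 c hc.1 hcp, hcp⟩
    · ext e0
      cases e0 with
      | inl a => simp
      | inr b => simp [and_comm]
  · push_neg at hcase
    have hYsub : ∀ c ∈ Sum.inr ⁻¹' v,
        ∃ g, g ∈ f (Sum.inl ⁻¹' v) ∧ B.pol g = false ∧ B.le c g := by
      intro c hc
      obtain ⟨g, hgY, hcg, hgmax⟩ := exists_maximal_above hYfin hc
      obtain ⟨h1g, h2g⟩ := hcase g hgY hgmax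
      exact ⟨g, h1g, h2g, hcg⟩
    have hmne : (Sum.inl ⁻¹' v : Set E).Nonempty := by
      rcases hvne with ⟨e0, he0⟩
      cases e0 with
      | inl a => exact ⟨a, he0⟩
      | inr b =>
        obtain ⟨g, hgf, hgp, _⟩ := hYsub b he0
        by_contra hemp
        rw [Set.not_nonempty_iff_eq_empty] at hemp
        rw [hemp] at hgf
        have := f_empty_pos hf g hgf
        rw [hgp] at this
        exact Bool.false_ne_true this
    obtain ⟨a₀, ha₀⟩ := hmne
    obtain ⟨a, ham, -, hamax⟩ := exists_maximal_above hmfin ha₀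
    have hnsub : (Sum.inl ⁻¹' v) \ {a} ⊆ Sum.inl ⁻¹' v := Set.diff_subset
    have hnc : A.Config ((Sum.inl ⁻¹' v) \ {a}) := by
      refine esConfig_subset hm hnsub ?_
      intro e2 e1 h12 h2'
      refine ⟨hm.2 h12 h2'.1, ?_⟩
      intro h1a; rw [Set.mem_singleton_iff] at h1a; subst h1a
      exact h2'.2 (by rw [Set.mem_singleton_iff]; exact hamax e2 h2'.1 h12)
    have hnm : f ((Sum.inl ⁻¹' v) \ {a}) ⊆ f (Sum.inl ⁻¹' v) := aff_mono hf hnc hm hnsub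
    have hdiff : ∀ e0 ∈ Sum.inl ⁻¹' v, e0 ∉ (Sum.inl ⁻¹' v) \ {a} → e0 = a := by
      intro e0 he0 hne0
      by_contra hne
      exact hne0 ⟨he0, by rw [Set.mem_singleton_iff]; exact hne⟩
    refine ⟨Sum.inl a, ham, ?_⟩
    have hveq : v \ {Sum.inl a} =
        Sum.inl '' ((Sum.inl ⁻¹' v) \ {a}) ∪ Sum.inr '' (Sum.inr ⁻¹' v) := by
      ext e0
      cases e0 with
      | inl a' => simp [and_comm]
      | inr b => simp
    by_cases hpa : A.pol a = true
    · have hsp : B.subPos (f ((Sum.inl ⁻¹' v) \ {a})) (f (Sum.inl ⁻¹' v)) :=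
        hf.2.2.1 _ _ hnc hm ⟨hnsub, fun e0 he0 hne0 => (hdiff e0 he0 hne0) ▸ hpa⟩
      have hYfn : ∀ c ∈ Sum.inr ⁻¹' v, c ∈ f ((Sum.inl ⁻¹' v) \ {a}) := by
        intro c hc
        obtain ⟨g, hgf, hgp, hcg⟩ := hYsub c hc
        have hgfn : g ∈ f ((Sum.inl ⁻¹' v) \ {a}) := by
          by_contra hno
          have := hsp.2 g hgf hno
          rw [hgp] at this; exact Bool.false_ne_true this
        exact (hf.1 _ hnc).2 hcg hgfn
      refine ⟨(Sum.inl ⁻¹' v) \ {a}, Sum.inr ⁻¹' v, hnc, hY, ⟨?_, ?_⟩, hveq⟩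
      · rintro b ⟨hbf, hbp⟩
        exact ⟨h1 b (hnm hbf) hbp, hbp⟩
      · rintro c ⟨hc, hcp⟩
        exact ⟨hYfn c hc, hcp⟩
    · have hpaf : A.pol a = false := by revert hpa; cases A.pol a <;> simp
      have hsn : B.subNeg (f ((Sum.inl ⁻¹' v) \ {a})) (f (Sum.inl ⁻¹' v)) :=
        hf.2.1 _ _ hnc hm ⟨hnsub, fun e0 he0 hne0 => (hdiff e0 he0 hne0) ▸ hpaf⟩
      refine ⟨(Sum.inl ⁻¹' v) \ {a}, Sum.inr ⁻¹' v, hnc, hY, ⟨?_, ?_⟩, hveq⟩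
      · rintro b ⟨hbf, hbp⟩
        exact ⟨h1 b (hsn.1 hbf) hbp, hbp⟩
      · rintro c ⟨hc, hcp⟩
        refine ⟨?_, hcp⟩
        have hcf : c ∈ f (Sum.inl ⁻¹' v) := h2 c hc hcp
        by_contra hno
        have := hsn.2 c hcf hno
        rw [hcp] at this; exact Bool.false_ne_true this.symm

end AuxStmt10b
/-- The family `{ x ∥ y : y ⊑_B f(x) }` of an affine-stable map `f` is a
stable family. -/
theorem stmt10 {E : Type u} {E' : Type v} (A : Game E) (B : Game E')
    (f : Set E → Set E') (hf : IsAffineStable A B f) :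
    IsStableFamily (affFamily A B f) := by
  -- Nonemptiness
  have hNe : (affFamily A B f).Nonempty := by
    refine ⟨Sum.inl '' ∅ ∪ Sum.inr '' (f ∅),
      ∅, f ∅, esConfig_empty A.toES, hf.1 ∅ (esConfig_empty A.toES), ⟨?_, ?_⟩, rfl⟩
    · exact fun e he => he
    · exact fun e he => he
  -- Completeness
  have hComplete : ∀ Z ⊆ affFamily A B f,
      (∀ W ⊆ Z, W.Finite → FamCompatible (affFamily A B f) W) → ⋃₀ Z ∈ affFamily A B f := by
    intro Z hZF hcomp
    have hxUc : A.Config (Sum.inl ⁻¹' ⋃₀ Z) := by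
      constructor
      · intro X hX hXf
        have hch : ∀ a : E, ∃ z : Set (E ⊕ E'), a ∈ X → z ∈ Z ∧ Sum.inl a ∈ z := by
          intro a
          by_cases ha : a ∈ X
          · obtain ⟨z, hzZ, haz⟩ := hX ha
            exact ⟨z, fun _ => ⟨hzZ, haz⟩⟩
          · exact ⟨∅, fun h => absurd h ha⟩
        choose g hg using hch
        obtain ⟨u, huF, hub⟩ := hcomp (g '' X)
          (by rintro z ⟨a, haX, rfl⟩; exact (hg a haX).1) (hXf.image g)
        have hXu : X ⊆ Sum.inl ⁻¹' u := fun a haX => hub (g a) ⟨a, haX, rfl⟩ (hg a haX).2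
        exact (mem_aff_iff.mp huF).1.1 X hXu hXf
      · intro e2 e1 h12 h2
        obtain ⟨z, hzZ, h2z⟩ := h2
        exact ⟨z, hzZ, (mem_aff_iff.mp (hZF hzZ)).1.2 h12 h2z⟩
    have hyUc : B.Config (Sum.inr ⁻¹' ⋃₀ Z) := by
      constructor
      · intro X hX hXf
        have hch : ∀ b : E', ∃ z : Set (E ⊕ E'), b ∈ X → z ∈ Z ∧ Sum.inr b ∈ z := by
          intro b
          by_cases hb : b ∈ X
          · obtain ⟨z, hzZ, hbz⟩ := hX hb
            exact ⟨z, fun _ => ⟨hzZ, hbz⟩⟩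
          · exact ⟨∅, fun h => absurd h hb⟩
        choose g hg using hch
        obtain ⟨u, huF, hub⟩ := hcomp (g '' X)
          (by rintro z ⟨b, hbX, rfl⟩; exact (hg b hbX).1) (hXf.image g)
        have hXu : X ⊆ Sum.inr ⁻¹' u := fun b hbX => hub (g b) ⟨b, hbX, rfl⟩ (hg b hbX).2
        exact (mem_aff_iff.mp huF).2.1.1 X hXu hXf
      · intro e2 e1 h12 h2
        obtain ⟨z, hzZ, h2z⟩ := h2
        exact ⟨z, hzZ, (mem_aff_iff.mp (hZF hzZ)).2.1.2 h12 h2z⟩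
    rw [mem_aff_iff]
    refine ⟨hxUc, hyUc, ?_, ?_⟩
    · intro b hb hbp
      have haf := hf.2.2.2.2.2.1 ((fun z => Sum.inl ⁻¹' z) '' Z)
        (by rintro z ⟨z', hz', rfl⟩; exact (mem_aff_iff.mp (hZF hz')).1)
        ⟨Sum.inl ⁻¹' ⋃₀ Z, hxUc, by
          rintro z ⟨z', hz', rfl⟩
          exact fun a ha => ⟨z', hz', ha⟩⟩
      have hUeq : ⋃₀ ((fun z => Sum.inl ⁻¹' z) '' Z) = Sum.inl ⁻¹' ⋃₀ Z := by
        ext a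
        constructor
        · rintro ⟨s, ⟨z, hz, rfl⟩, ha⟩; exact ⟨z, hz, ha⟩
        · rintro ⟨z, hz, ha⟩; exact ⟨Sum.inl ⁻¹' z, ⟨z, hz, rfl⟩, ha⟩
      rw [hUeq] at haf
      have hb2 : b ∈ ⋃₀ (f '' ((fun z => Sum.inl ⁻¹' z) '' Z)) := by
        by_contra hno
        have := haf.2 b hb hno
        rw [hbp] at this; exact Bool.false_ne_true this
      obtain ⟨s, ⟨t, ⟨z, hzZ, rfl⟩, rfl⟩, hbs⟩ := hb2
      have := (mem_aff_iff.mp (hZF hzZ)).2.2.1 b hbs hbp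
      exact ⟨z, hzZ, this⟩
    · intro b hb hbp
      obtain ⟨z, hzZ, hbz⟩ := hb
      have hbfz := (mem_aff_iff.mp (hZF hzZ)).2.2.2 b hbz hbp
      exact aff_mono hf (mem_aff_iff.mp (hZF hzZ)).1 hxUc
        (fun a ha => ⟨z, hzZ, ha⟩) hbfz
  -- Stability
  have hStable : ∀ Z ⊆ affFamily A B f, Z.Nonempty →
      FamCompatible (affFamily A B f) Z → ⋂₀ Z ∈ affFamily A B f := by
    intro Z hZF hZne hZcomp
    obtain ⟨z₀, hz₀⟩ := hZne
    obtain ⟨u, huF, hub⟩ := hZcomp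
    have hxIc : A.Config (Sum.inl ⁻¹' ⋂₀ Z) := by
      constructor
      · intro X hX hXf
        exact (mem_aff_iff.mp (hZF hz₀)).1.1 X
          (fun a ha => Set.mem_sInter.mp (hX ha) z₀ hz₀) hXf
      · intro e2 e1 h12 h2
        refine Set.mem_sInter.mpr (fun z hz => ?_)
        exact (mem_aff_iff.mp (hZF hz)).1.2 h12 (Set.mem_sInter.mp h2 z hz)
    have hyIc : B.Config (Sum.inr ⁻¹' ⋂₀ Z) := by
      constructor
      · intro X hX hXf
        exact (mem_aff_iff.mp (hZF hz₀)).2.1.1 X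
          (fun b hb => Set.mem_sInter.mp (hX hb) z₀ hz₀) hXf
      · intro e2 e1 h12 h2
        refine Set.mem_sInter.mpr (fun z hz => ?_)
        exact (mem_aff_iff.mp (hZF hz)).2.1.2 h12 (Set.mem_sInter.mp h2 z hz)
    have hIeq : ⋂₀ ((fun z => Sum.inl ⁻¹' z) '' Z) = Sum.inl ⁻¹' ⋂₀ Z := by
      ext a
      constructor
      · intro h
        refine Set.mem_sInter.mpr (fun z hz => ?_)
        exact Set.mem_sInter.mp h _ ⟨z, hz, rfl⟩
      · intro h
        refine Set.mem_sInter.mpr ?_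
        rintro s ⟨z, hz, rfl⟩
        exact Set.mem_sInter.mp h z hz
    have hst := hf.2.2.2.2.2.2 ((fun z => Sum.inl ⁻¹' z) '' Z)
      ⟨Sum.inl ⁻¹' z₀, ⟨z₀, hz₀, rfl⟩⟩
      (by rintro z ⟨z', hz', rfl⟩; exact (mem_aff_iff.mp (hZF hz')).1)
      ⟨Sum.inl ⁻¹' u, (mem_aff_iff.mp huF).1, by
        rintro z ⟨z', hz', rfl⟩
        exact fun a ha => hub z' hz' ha⟩
    rw [hIeq] at hst
    rw [mem_aff_iff]
    refine ⟨hxIc, hyIc, ?_, ?_⟩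
    · intro b hb hbp
      refine Set.mem_sInter.mpr (fun z hz => ?_)
      have hbz : b ∈ f (Sum.inl ⁻¹' z) :=
        Set.mem_sInter.mp (hst.1 hb) _ ⟨_, ⟨z, hz, rfl⟩, rfl⟩
      exact (mem_aff_iff.mp (hZF hz)).2.2.1 b hbz hbp
    · intro b hb hbp
      have hbIn : b ∈ ⋂₀ (f '' ((fun z => Sum.inl ⁻¹' z) '' Z)) := by
        refine Set.mem_sInter.mpr ?_
        rintro s ⟨t, ⟨z, hz, rfl⟩, rfl⟩
        exact (mem_aff_iff.mp (hZF hz)).2.2.2 b (Set.mem_sInter.mp hb z hz) hbp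
      by_contra hno
      have := hst.2 b hbIn hno
      rw [hbp] at this; exact Bool.false_ne_true this.symm
  -- Finitariness
  have hFinit : ∀ w ∈ affFamily A B f, ∀ e ∈ w,
      ∃ w₀ ∈ affFamily A B f, w₀.Finite ∧ e ∈ w₀ ∧ w₀ ⊆ w := by
    intro w hw e he
    obtain ⟨hxw, hyw, hw1, hw2⟩ := mem_aff_iff.mp hw
    cases e with
    | inl a =>
      have haw : a ∈ Sum.inl ⁻¹' w := he
      have hx₀s : {a' | A.le a' a} ⊆ Sum.inl ⁻¹' w := fun a' ha' => hxw.2 ha' haw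
      have hx₀c : A.Config {a' | A.le a' a} :=
        esConfig_subset hxw hx₀s (fun _ _ h12 h2 => A.le_trans h12 h2)
      obtain ⟨hm, hsub, hfin⟩ := build_member (t := ∅) hf hw hx₀c hx₀s (A.finitary a)
        (Set.empty_subset _) Set.finite_empty
        (fun c d _ hd => absurd hd (Set.notMem_empty d))
        (fun c hc => absurd hc (Set.notMem_empty c))
      exact ⟨_, hm, hfin, Set.mem_union_left _ ⟨a, A.le_refl a, rfl⟩, hsub⟩
    | inr b =>
      have hbw : b ∈ Sum.inr ⁻¹' w := he
      have hPfin : {c | B.le c b ∧ B.pol c = true}.Finite :=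
        (B.finitary b).subset (fun c hc => hc.1)
      have hch : ∀ c : E', ∃ z : Set E, A.Config z ∧ z.Finite ∧ z ⊆ Sum.inl ⁻¹' w ∧
          (c ∈ {c | B.le c b ∧ B.pol c = true} → c ∈ f z) := by
        intro c
        by_cases hc : c ∈ {c | B.le c b ∧ B.pol c = true}
        · have hcy : c ∈ Sum.inr ⁻¹' w := hyw.2 hc.1 hbw
          have hcf : c ∈ f (Sum.inl ⁻¹' w) := hw2 c hcy hc.2
          obtain ⟨z, hz1, hz2, hz3, hz4⟩ := hf.2.2.2.1 (Sum.inl ⁻¹' w) hxw c hcf hc.2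
          exact ⟨z, hz1, hz2, hz3, fun _ => hz4⟩
        · exact ⟨∅, esConfig_empty A.toES, Set.finite_empty, Set.empty_subset _,
            fun h => absurd h hc⟩
      choose g hg1 hg2 hg3 hg4 using hch
      have hx₀s : (⋃ c ∈ {c | B.le c b ∧ B.pol c = true}, g c) ⊆ Sum.inl ⁻¹' w :=
        Set.iUnion₂_subset (fun c _ => hg3 c)
      have hx₀f : (⋃ c ∈ {c | B.le c b ∧ B.pol c = true}, g c).Finite :=
        hPfin.biUnion (fun c _ => hg2 c)
      have hx₀c : A.Config (⋃ c ∈ {c | B.le c b ∧ B.pol c = true}, g c) := by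
        refine esConfig_subset hxw hx₀s ?_
        intro e2 e1 h12 h2
        obtain ⟨c, hcP, he2⟩ := Set.mem_iUnion₂.mp h2
        exact Set.mem_iUnion₂.mpr ⟨c, hcP, (hg1 c).2 h12 he2⟩
      have hPf : ∀ c ∈ {c | B.le c b ∧ B.pol c = true},
          c ∈ f (⋃ c ∈ {c | B.le c b ∧ B.pol c = true}, g c) := fun c hc =>
        aff_mono hf (hg1 c) hx₀c (Set.subset_biUnion_of_mem hc) (hg4 c hc)
      have hts : {c | B.le c b} ⊆ Sum.inr ⁻¹' w := fun c hc => hyw.2 hc hbw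
      obtain ⟨hm, hsub, hfin⟩ := build_member hf hw hx₀c hx₀s hx₀f hts (B.finitary b)
        (fun c d hcd hd => B.le_trans hcd hd)
        (fun c hc hcp => hPf c ⟨hc, hcp⟩)
      exact ⟨_, hm, hfin,
        Set.mem_union_right _ ⟨b, Set.mem_union_left _ (B.le_refl b), rfl⟩, hsub⟩
  -- Coincidence-freeness
  have hCoin : ∀ w ∈ affFamily A B f, ∀ e ∈ w, ∀ e' ∈ w, e ≠ e' →
      ∃ w₀ ∈ affFamily A B f, w₀ ⊆ w ∧ (e ∈ w₀ ↔ e' ∉ w₀) := by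
    intro w hw e he e' he' hne
    have hwM : w ∈ {u | u ∈ affFamily A B f ∧ u ⊆ w ∧ e ∈ u} := ⟨hw, subset_rfl, he⟩
    have hvF : ⋂₀ {u | u ∈ affFamily A B f ∧ u ⊆ w ∧ e ∈ u} ∈ affFamily A B f :=
      hStable _ (fun u hu => hu.1) ⟨w, hwM⟩ ⟨w, hw, fun u hu => hu.2.1⟩
    have hev : e ∈ ⋂₀ {u | u ∈ affFamily A B f ∧ u ⊆ w ∧ e ∈ u} :=
      Set.mem_sInter.mpr (fun u hu => hu.2.2)
    have hvw : ⋂₀ {u | u ∈ affFamily A B f ∧ u ⊆ w ∧ e ∈ u} ⊆ w :=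
      Set.sInter_subset_of_mem hwM
    have hvfin : (⋂₀ {u | u ∈ affFamily A B f ∧ u ⊆ w ∧ e ∈ u}).Finite := by
      obtain ⟨v₀, hv₀F, hv₀fin, hev₀, hv₀w⟩ := hFinit w hw e he
      exact hv₀fin.subset (Set.sInter_subset_of_mem ⟨hv₀F, hv₀w, hev₀⟩)
    by_cases he'v : e' ∈ ⋂₀ {u | u ∈ affFamily A B f ∧ u ⊆ w ∧ e ∈ u}
    · obtain ⟨g, hgv, hgF⟩ := peel hf hvF hvfin ⟨e, hev⟩
      rcases eq_or_ne g e with rfl | hge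
      · refine ⟨_ \ {g}, hgF, Set.diff_subset.trans hvw, ?_⟩
        refine iff_of_false (fun h => h.2 rfl) (fun h => h ⟨he'v, ?_⟩)
        rw [Set.mem_singleton_iff]
        exact fun hh => hne hh.symm
      · rcases eq_or_ne g e' with rfl | hge'
        · refine ⟨_ \ {g}, hgF, Set.diff_subset.trans hvw, ?_⟩
          refine iff_of_true ⟨hev, ?_⟩ (fun h => h.2 rfl)
          rw [Set.mem_singleton_iff]
          exact fun hh => hne hh
        · exfalso
          have hmem : (⋂₀ {u | u ∈ affFamily A B f ∧ u ⊆ w ∧ e ∈ u}) \ {g} ∈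
              {u | u ∈ affFamily A B f ∧ u ⊆ w ∧ e ∈ u} := by
            refine ⟨hgF, Set.diff_subset.trans hvw, ⟨hev, ?_⟩⟩
            rw [Set.mem_singleton_iff]
            exact fun hh => hge hh.symm
          have := Set.sInter_subset_of_mem hmem hgv
          exact this.2 rfl
    · exact ⟨_, hvF, hvw, iff_of_true hev he'v⟩
  exact ⟨hNe, hComplete, hStable, hFinit, hCoin⟩
end

section
/- Composition of the stable families of affine-stable maps is relational: if f : A → B and g : B → C are affine-stable maps with associated stable families F = { x ∥ y : f(x) ⊒_B y } and G = { y ∥ z : g(y) ⊒_C z }, then the stable family of g∘f equals the relational composition { x ∥ z : ∃ y ∈ C∞(B). x ∥ y ∈ F and y ∥ z ∈ G }. -/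
universe u v w

section Aux

variable {E : Type u} {E' : Type v}

lemma scottLE_refl (G : Game E) (x : Set E) : G.ScottLE x x :=
  ⟨subset_rfl, subset_rfl⟩

lemma scottLE_trans (G : Game E) {x y z : Set E}
    (h1 : G.ScottLE x y) (h2 : G.ScottLE y z) : G.ScottLE x z :=
  ⟨h1.1.trans' h2.1, h1.2.trans h2.2⟩

lemma config_inter (G : Game E) {x y : Set E}
    (hx : G.Config x) (hy : G.Config y) : G.Config (x ∩ y) := by
  constructor
  · intro X hX hXf
    exact hx.1 X (hX.trans Set.inter_subset_left) hXf
  · intro e e' hle he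
    exact ⟨hx.2 hle he.1, hy.2 hle he.2⟩

lemma scottLE_subNeg (G : Game E) {x y : Set E} (h : G.ScottLE y x) :
    G.subNeg (x ∩ y) y := by
  refine ⟨Set.inter_subset_right, fun e hey hem => ?_⟩
  cases hpol : G.pol e with
  | false => rfl
  | true => exact absurd ⟨(h.2 ⟨hey, hpol⟩).1, hey⟩ hem

lemma scottLE_subPos (G : Game E) {x y : Set E} (h : G.ScottLE y x) :
    G.subPos (x ∩ y) x := by
  refine ⟨Set.inter_subset_left, fun e hex hem => ?_⟩
  cases hpol : G.pol e with
  | false => exact absurd ⟨hex, (h.1 ⟨hex, hpol⟩).1⟩ hem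
  | true => rfl

lemma scottLE_of_subs {G : Game E} {m x y : Set E}
    (hn : G.subNeg m y) (hp : G.subPos m x) : G.ScottLE y x := by
  constructor
  · rintro e ⟨hex, hpol⟩
    refine ⟨hn.1 ?_, hpol⟩
    by_contra hem
    simp [hp.2 e hex hem] at hpol
  · rintro e ⟨hey, hpol⟩
    refine ⟨hp.1 ?_, hpol⟩
    by_contra hem
    simp [hn.2 e hey hem] at hpol

/-- Affine-stable maps preserve the Scott order. -/
lemma scottLE_map {A : Game E} {B : Game E'} {f : Set E → Set E'}
    (hf : IsAffineStable A B f) {x y : Set E}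
    (hx : A.Config x) (hy : A.Config y) (h : A.ScottLE y x) :
    B.ScottLE (f y) (f x) := by
  have hm : A.Config (x ∩ y) := config_inter A hx hy
  have hn := hf.2.1 _ _ hm hy (scottLE_subNeg A h)
  have hp := hf.2.2.1 _ _ hm hx (scottLE_subPos A h)
  exact scottLE_of_subs hn hp

end Aux

/-- Composition of the stable families of affine-stable maps is relational. -/
theorem stmt14 {E : Type u} {E' : Type v} {E'' : Type w}
    (A : Game E) (B : Game E') (C : Game E'')
    (f : Set E → Set E') (g : Set E' → Set E'')
    (hf : IsAffineStable A B f) (hg : IsAffineStable B C g) :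
    affFamily A C (fun x => g (f x)) =
    {w | ∃ x z, A.Config x ∧ C.Config z ∧
      (∃ y, B.Config y ∧ B.ScottLE y (f x) ∧ C.ScottLE z (g y)) ∧
      w = Sum.inl '' x ∪ Sum.inr '' z} := by
  ext w
  constructor
  · rintro ⟨x, z, hx, hz, hgf, rfl⟩
    exact ⟨x, z, hx, hz, ⟨f x, hf.1 x hx, scottLE_refl B _, hgf⟩, rfl⟩
  · rintro ⟨x, z, hx, hz, ⟨y, hy, hyf, hzg⟩, rfl⟩
    refine ⟨x, z, hx, hz, ?_, rfl⟩
    exact scottLE_trans C hzg (scottLE_map hg (hf.1 x hx) hy hyf)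
end

section
/- No causal loops when one side is partial rigid: let σ : S → A⊥ ∥ B and τ : T → B⊥ ∥ C be strategies with τ's component over B partial rigid. Then for configurations x of S and y of T, the interaction y ⊛ x is defined if and only if the images of x and y over B agree (σ₂ x = τ₁ y); that is, the induced bijection over the common part is automatically secured. -/
universe u v w

section Strategies

/-- A (concurrent) strategy `σ : S → G`, with the game `G` given by its
polarity, causal order and configurations: a total, locally injective,
polarity-preserving map of event structures, receptive and innocent. -/
def IsStrategy {Y X : Type*} (S : Game Y) (pol : X → Bool) (le : X → X → Prop)
    (Cfg : Set X → Prop) (σ : Y → X) : Prop :=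
  (∀ x, S.Config x → Cfg (σ '' x)) ∧
  (∀ x, S.Config x → ∀ s ∈ x, ∀ s' ∈ x, σ s = σ s' → s = s') ∧
  (∀ s, pol (σ s) = S.pol s) ∧
  (∀ x z, S.Config x → Cfg z → σ '' x ⊆ z →
    (∀ e ∈ z, e ∉ σ '' x → pol e = false) →
    ∃! x', S.Config x' ∧ x ⊆ x' ∧ σ '' x' = z) ∧
  (∀ s s', Covers S.le s s' → (S.pol s = true ∨ S.pol s' = false) →
    Covers le (σ s) (σ s'))

variable {α : Type u} {β : Type v} {γ : Type w} {YS YT : Type*}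

/-- One step of the causal order generated on an interaction of `σ` and `τ`
over the common game `B`: the orders of `S` and `T`, with events over `B`
identified via the matching of their images. -/
def istep (SG : Game YS) (TG : Game YT) (σ : YS → α ⊕ β) (τ : YT → β ⊕ γ)
    (x : Set YS) (y : Set YT) : (YS ⊕ YT) → (YS ⊕ YT) → Prop
  | .inl s, .inl s' => s ∈ x ∧ s' ∈ x ∧ SG.le s s'
  | .inr t, .inr t' => t ∈ y ∧ t' ∈ y ∧ TG.le t t'
  | .inl s, .inr t => s ∈ x ∧ t ∈ y ∧ ∃ b, σ s = Sum.inr b ∧ τ t = Sum.inl b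
  | .inr t, .inl s => s ∈ x ∧ t ∈ y ∧ ∃ b, σ s = Sum.inr b ∧ τ t = Sum.inl b

/-- The induced bijection is secured: the generated transitive relation is a
finitary partial order (antisymmetric up to the identification of matched
events over `B`). -/
def Secured (SG : Game YS) (TG : Game YT) (σ : YS → α ⊕ β) (τ : YT → β ⊕ γ)
    (x : Set YS) (y : Set YT) : Prop :=
  (∀ p : YS ⊕ YT,
    Set.Finite {q | Relation.ReflTransGen (istep SG TG σ τ x y) q p}) ∧
  (∀ p q, Relation.ReflTransGen (istep SG TG σ τ x y) p q →
    Relation.ReflTransGen (istep SG TG σ τ x y) q p →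
    p = q ∨ ∃ s t,
      ((p = Sum.inl s ∧ q = Sum.inr t) ∨ (p = Sum.inr t ∧ q = Sum.inl s)) ∧
      ∃ b, σ s = Sum.inr b ∧ τ t = Sum.inl b)

/-- `σ₂ x = τ₁ y` : the images of `x` and `y` over the common game `B` agree. -/
def matchOverB (σ : YS → α ⊕ β) (τ : YT → β ⊕ γ)
    (x : Set YS) (y : Set YT) : Prop :=
  {b | ∃ s ∈ x, σ s = Sum.inr b} = {b | ∃ t ∈ y, τ t = Sum.inl b}

end Strategies

section NoLoopsAux

variable {α : Type u} {β : Type v} {γ : Type w} {YS YT : Type*}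

/-- A matched pair: `t ∈ y` and `s ∈ x` synchronize over a common `B`-event. -/
def NLLink (σ : YS → α ⊕ β) (τ : YT → β ⊕ γ) (x : Set YS) (y : Set YT)
    (t : YT) (s : YS) : Prop :=
  t ∈ y ∧ s ∈ x ∧ ∃ b, σ s = Sum.inr b ∧ τ t = Sum.inl b

/-- Dominance by an `S`-event. -/
def NLDinl (SG : Game YS) (TG : Game YT) (σ : YS → α ⊕ β) (τ : YT → β ⊕ γ)
    (x : Set YS) (y : Set YT) (q : YS ⊕ YT) (s : YS) : Prop :=
  match q with
  | .inl s' => SG.le s' s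
  | .inr t' => ∃ t₁ s₁, TG.le t' t₁ ∧ NLLink σ τ x y t₁ s₁ ∧ SG.le s₁ s

/-- Dominance by a `T`-event. -/
def NLDinr (SG : Game YS) (TG : Game YT) (σ : YS → α ⊕ β) (τ : YT → β ⊕ γ)
    (x : Set YS) (y : Set YT) (q : YS ⊕ YT) (t : YT) : Prop :=
  (∃ t', q = Sum.inr t' ∧ TG.le t' t) ∨
  ∃ t₁ s₁, TG.le t₁ t ∧ NLLink σ τ x y t₁ s₁ ∧ NLDinl SG TG σ τ x y q s₁

/-- Dominance. -/
def NLD (SG : Game YS) (TG : Game YT) (σ : YS → α ⊕ β) (τ : YT → β ⊕ γ)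
    (x : Set YS) (y : Set YT) (q p : YS ⊕ YT) : Prop :=
  match p with
  | .inl s => NLDinl SG TG σ τ x y q s
  | .inr t => NLDinr SG TG σ τ x y q t

end NoLoopsAux

/-- If `τ`'s component over `B` is partial rigid then the interaction `y ⊛ x`
is defined iff the images of `x` and `y` over `B` agree: the induced bijection
is automatically secured. -/
theorem stmt16 {α : Type u} {β : Type v} {γ : Type w} {YS YT : Type*}
    (A : Game α) (B : Game β) (C : Game γ) (SG : Game YS) (TG : Game YT)
    (σ : YS → α ⊕ β) (τ : YT → β ⊕ γ)
    (hσ : IsStrategy SG (parPolL A B) (parLE A B) (parConfig A B) σ)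
    (hτ : IsStrategy TG (parPolL B C) (parLE B C) (parConfig B C) τ)
    (hrig : ∀ t t', TG.le t t' → ∀ b b',
      τ t = Sum.inl b → τ t' = Sum.inl b' → B.le b b')
    (x : Set YS) (y : Set YT) (hx : SG.Config x) (hy : TG.Config y) :
    (matchOverB σ τ x y ∧ Secured SG TG σ τ x y) ↔ matchOverB σ τ x y := by
  -- σ reflects the B-order on the configuration x
  have L1σ : ∀ s ∈ x, ∀ s' ∈ x, ∀ b b', σ s = Sum.inr b → σ s' = Sum.inr b' →
      B.le b b' → SG.le s s' := by
    intro s hs s' hs' b b' hb hb' hbb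
    have hzx : {u | SG.le u s'} ⊆ x := fun u hu => hx.2 hu hs'
    have hz : SG.Config {u | SG.le u s'} :=
      ⟨fun X hX hXf => hx.1 X (hX.trans hzx) hXf,
       fun e e' hle he => SG.le_trans hle he⟩
    have himg := (hσ.1 _ hz).2
    have hb'mem : b' ∈ Sum.inr ⁻¹' (σ '' {u | SG.le u s'}) :=
      ⟨s', SG.le_refl s', hb'⟩
    have hbmem : b ∈ Sum.inr ⁻¹' (σ '' {u | SG.le u s'}) := himg.2 hbb hb'mem
    obtain ⟨sb, hsbz, hsb⟩ := hbmem
    have he : s = sb := hσ.2.1 x hx s hs sb (hzx hsbz) (by rw [hb, hsb])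
    exact he ▸ hsbz
  -- rigidity transfers the T-order to the S-order along links
  have L2 : ∀ t s t' s', NLLink σ τ x y t s → NLLink σ τ x y t' s' →
      TG.le t t' → SG.le s s' := by
    rintro t s t' s' ⟨ht, hs, b, hσs, hτt⟩ ⟨ht', hs', b', hσs', hτt'⟩ htt
    exact L1σ s hs s' hs' b b' hσs hσs' (hrig t t' htt b b' hτt hτt')
  -- link partners are unique
  have L3σ : ∀ t s s', NLLink σ τ x y t s → NLLink σ τ x y t s' → s = s' := by
    rintro t s s' ⟨ht, hs, b, hσs, hτt⟩ ⟨_, hs', b', hσs', hτt'⟩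
    have hb : b = b' := by rw [hτt] at hτt'; exact Sum.inl.inj hτt'
    exact hσ.2.1 x hx s hs s' hs' (by rw [hσs, hσs', hb])
  have L3τ : ∀ t t' s, NLLink σ τ x y t s → NLLink σ τ x y t' s → t = t' := by
    rintro t t' s ⟨ht, hs, b, hσs, hτt⟩ ⟨ht', _, b', hσs', hτt'⟩
    have hb : b = b' := by rw [hσs] at hσs'; exact Sum.inr.inj hσs'
    exact hτ.2.1 y hy t ht t' ht' (by rw [hτt, hτt', hb])
  -- one step into a dominated event stays dominated
  have base : ∀ q p, istep SG TG σ τ x y q p → NLD SG TG σ τ x y q p := by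
    rintro (s' | t') (s | t) h
    · exact h.2.2
    · exact Or.inr ⟨t, s', TG.le_refl t, ⟨h.2.1, h.1, h.2.2⟩, SG.le_refl s'⟩
    · exact ⟨t', s, TG.le_refl t', ⟨h.2.1, h.1, h.2.2⟩, SG.le_refl s⟩
    · exact Or.inl ⟨t', rfl, h.2.2⟩
  have stepInl : ∀ q r s, istep SG TG σ τ x y q r →
      NLDinl SG TG σ τ x y r s → NLDinl SG TG σ τ x y q s := by
    rintro (s₁ | t₁) (s₂ | t₂) s h hd
    · exact SG.le_trans h.2.2 hd
    · obtain ⟨t₃, s₃, h23, l3, h3s⟩ := hd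
      exact SG.le_trans (L2 t₂ s₁ t₃ s₃ ⟨h.2.1, h.1, h.2.2⟩ l3 h23) h3s
    · exact ⟨t₁, s₂, TG.le_refl t₁, ⟨h.2.1, h.1, h.2.2⟩, hd⟩
    · obtain ⟨t₃, s₃, h23, l3, h3s⟩ := hd
      exact ⟨t₃, s₃, TG.le_trans h.2.2 h23, l3, h3s⟩
  have stepInr : ∀ q r t, istep SG TG σ τ x y q r →
      NLDinr SG TG σ τ x y r t → NLDinr SG TG σ τ x y q t := by
    intro q r t h hd
    rcases hd with ⟨t₂, rfl, h2t⟩ | ⟨t₁, s₁, h1t, l1, hdl⟩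
    · rcases q with s₁ | t₁
      · exact Or.inr ⟨t₂, s₁, h2t, ⟨h.2.1, h.1, h.2.2⟩, SG.le_refl s₁⟩
      · exact Or.inl ⟨t₁, rfl, TG.le_trans h.2.2 h2t⟩
    · exact Or.inr ⟨t₁, s₁, h1t, l1, stepInl q r s₁ h hdl⟩
  have stepD : ∀ q r p, istep SG TG σ τ x y q r →
      NLD SG TG σ τ x y r p → NLD SG TG σ τ x y q p := by
    rintro q r (s | t) h hd
    · exact stepInl q r s h hd
    · exact stepInr q r t h hd
  -- the invariant along the generated relation
  have inv : ∀ q p, Relation.ReflTransGen (istep SG TG σ τ x y) q p →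
      q = p ∨ NLD SG TG σ τ x y q p := by
    intro q p hqp
    induction hqp using Relation.ReflTransGen.head_induction_on with
    | refl => exact Or.inl rfl
    | head hstep _ ih =>
      rcases ih with rfl | hd
      · exact Or.inr (base _ _ hstep)
      · exact Or.inr (stepD _ _ _ hstep hd)
  -- finiteness of dominated sets
  have partnerT : ∀ s₁, {t₁ | NLLink σ τ x y t₁ s₁}.Finite := fun s₁ =>
    Set.Subsingleton.finite (fun t ht t' ht' => L3τ t t' s₁ ht ht')
  have partnerS : ∀ t₁, {s₁ | NLLink σ τ x y t₁ s₁}.Finite := fun t₁ =>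
    Set.Subsingleton.finite (fun s hs s' hs' => L3σ t₁ s s' hs hs')
  have finInl : ∀ s, {q | NLDinl SG TG σ τ x y q s}.Finite := by
    intro s
    have h1 : {q | NLDinl SG TG σ τ x y q s} ⊆
        Sum.inl '' {s' | SG.le s' s} ∪
        Sum.inr '' ⋃ s₁ ∈ {s₁ | SG.le s₁ s},
          ⋃ t₁ ∈ {t₁ | NLLink σ τ x y t₁ s₁}, {t' | TG.le t' t₁} := by
      rintro (s' | t') hq
      · exact Or.inl ⟨s', hq, rfl⟩
      · obtain ⟨t₁, s₁, h1, l1, hs₁⟩ := hq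
        exact Or.inr ⟨t', Set.mem_biUnion hs₁ (Set.mem_biUnion l1 h1), rfl⟩
    refine Set.Finite.subset (Set.Finite.union ((SG.finitary s).image _)
      (Set.Finite.image _ ?_)) h1
    exact (SG.finitary s).biUnion fun s₁ _ =>
      (partnerT s₁).biUnion fun t₁ _ => TG.finitary t₁
  have finInr : ∀ t, {q | NLDinr SG TG σ τ x y q t}.Finite := by
    intro t
    have h1 : {q | NLDinr SG TG σ τ x y q t} ⊆
        Sum.inr '' {t' | TG.le t' t} ∪
        ⋃ t₁ ∈ {t₁ | TG.le t₁ t}, ⋃ s₁ ∈ {s₁ | NLLink σ τ x y t₁ s₁},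
          {q | NLDinl SG TG σ τ x y q s₁} := by
      rintro q hq
      rcases hq with ⟨t', rfl, h⟩ | ⟨t₁, s₁, h1t, l1, hd⟩
      · exact Or.inl ⟨t', h, rfl⟩
      · exact Or.inr (Set.mem_biUnion h1t (Set.mem_biUnion l1 hd))
    exact Set.Finite.subset (((TG.finitary t).image _).union
      ((TG.finitary t).biUnion fun t₁ _ =>
        (partnerS t₁).biUnion fun s₁ _ => finInl s₁)) h1
  refine ⟨fun h => h.1, fun hm => ⟨hm, ?_, ?_⟩⟩
  · -- finitariness
    intro p
    have hsub : {q | Relation.ReflTransGen (istep SG TG σ τ x y) q p} ⊆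
        insert p {q | NLD SG TG σ τ x y q p} := by
      intro q hq
      rcases inv q p hq with rfl | hd
      · exact Set.mem_insert _ _
      · exact Set.mem_insert_of_mem _ hd
    rcases p with s | t
    · exact Set.Finite.subset ((finInl s).insert _) hsub
    · exact Set.Finite.subset ((finInr t).insert _) hsub
  · -- antisymmetry up to matched pairs
    intro p q hpq hqp
    rcases inv p q hpq with rfl | hd1
    · exact Or.inl rfl
    rcases inv q p hqp with rfl | hd2
    · exact Or.inl rfl
    rcases p with s | t <;> rcases q with s' | t'
    · exact Or.inl (congrArg Sum.inl (SG.le_antisymm hd1 hd2))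
    · -- p = inl s, q = inr t'
      rcases hd1 with ⟨t₀, he, _⟩ | ⟨t₁, s₁, h1t, l1, hss₁⟩
      · exact absurd he (by simp)
      obtain ⟨t₂, s₂, htt₂, l2, hs₂s⟩ := hd2
      have hs₁s₂ : SG.le s₁ s₂ := L2 t₁ s₁ t₂ s₂ l1 l2 (TG.le_trans h1t htt₂)
      have es : s₁ = s₂ := SG.le_antisymm hs₁s₂ (SG.le_trans hs₂s hss₁)
      have es1 : s = s₁ := SG.le_antisymm hss₁ (es ▸ hs₂s)
      have et : t₁ = t₂ := L3τ t₁ t₂ s₁ l1 (es ▸ l2)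
      have et1 : t' = t₁ := TG.le_antisymm (et ▸ htt₂) h1t
      refine Or.inr ⟨s, t', Or.inl ⟨rfl, rfl⟩, ?_⟩
      have := l1.2.2
      rw [← es1, ← et1] at this
      exact this
    · -- p = inr t, q = inl s'
      rcases hd2 with ⟨t₀, he, _⟩ | ⟨t₁, s₁, h1t, l1, hss₁⟩
      · exact absurd he (by simp)
      obtain ⟨t₂, s₂, htt₂, l2, hs₂s⟩ := hd1
      have hs₁s₂ : SG.le s₁ s₂ := L2 t₁ s₁ t₂ s₂ l1 l2 (TG.le_trans h1t htt₂)
      have es : s₁ = s₂ := SG.le_antisymm hs₁s₂ (SG.le_trans hs₂s hss₁)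
      have es1 : s' = s₁ := SG.le_antisymm hss₁ (es ▸ hs₂s)
      have et : t₁ = t₂ := L3τ t₁ t₂ s₁ l1 (es ▸ l2)
      have et1 : t = t₁ := TG.le_antisymm (et ▸ htt₂) h1t
      refine Or.inr ⟨s', t, Or.inr ⟨rfl, rfl⟩, ?_⟩
      have := l1.2.2
      rw [← es1, ← et1] at this
      exact this
    · -- p = inr t, q = inr t'
      rcases hd1 with ⟨t₀, he, h1⟩ | ⟨t₁, s₁, h1t', l1, t₂, s₂, htt₂, l2, hs₂s₁⟩ <;>
        rcases hd2 with ⟨t₀', he', h2⟩ | ⟨t₁', s₁', h1't, l1', t₂', s₂', h't₂', l2', hs₂'s₁'⟩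
      · obtain rfl := Sum.inr.inj he
        obtain rfl := Sum.inr.inj he'
        exact Or.inl (congrArg Sum.inr (TG.le_antisymm h1 h2))
      · -- t ≤ t' and the other side via a link
        obtain rfl := Sum.inr.inj he
        -- hd2 second: t₁' ≤ t, link l1', and NLDinl (inr t') s₁' : t' ≤ t₂', l2', s₂' ≤ s₁'
        have hchain : TG.le t₁' t₂' := TG.le_trans h1't (TG.le_trans h1 h't₂')
        have hs : SG.le s₁' s₂' := L2 t₁' s₁' t₂' s₂' l1' l2' hchain
        have es : s₁' = s₂' := SG.le_antisymm hs hs₂'s₁'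
        have et : t₁' = t₂' := L3τ t₁' t₂' s₁' l1' (es ▸ l2')
        have : t = t' := TG.le_antisymm h1 (TG.le_trans h't₂' (et ▸ h1't))
        exact Or.inl (congrArg Sum.inr this)
      · obtain rfl := Sum.inr.inj he'
        have hchain : TG.le t₁ t₂ := TG.le_trans h1t' (TG.le_trans h2 htt₂)
        have hs : SG.le s₁ s₂ := L2 t₁ s₁ t₂ s₂ l1 l2 hchain
        have es : s₁ = s₂ := SG.le_antisymm hs hs₂s₁
        have et : t₁ = t₂ := L3τ t₁ t₂ s₁ l1 (es ▸ l2)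
        have : t = t' := TG.le_antisymm (TG.le_trans htt₂ (et ▸ h1t')) h2
        exact Or.inl (congrArg Sum.inr this)
      · -- both via links
        have hA : SG.le s₁' s₂ := L2 t₁' s₁' t₂ s₂ l1' l2 (TG.le_trans h1't htt₂)
        have hB : SG.le s₁ s₂' := L2 t₁ s₁ t₂' s₂' l1 l2' (TG.le_trans h1t' h't₂')
        have e1 : s₁ = s₂ := SG.le_antisymm
          (SG.le_trans hB (SG.le_trans hs₂'s₁' hA)) hs₂s₁
        have e2 : s₁' = s₂' := SG.le_antisymm
          (SG.le_trans hA (SG.le_trans hs₂s₁ hB)) hs₂'s₁'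
        have et : t₁ = t₂ := L3τ t₁ t₂ s₁ l1 (e1 ▸ l2)
        have et' : t₁' = t₂' := L3τ t₁' t₂' s₁' l1' (e2 ▸ l2')
        have h1 : TG.le t t' := TG.le_trans htt₂ (et ▸ h1t')
        have h2 : TG.le t' t := TG.le_trans h't₂' (et' ▸ h1't)
        exact Or.inl (congrArg Sum.inr (TG.le_antisymm h1 h2))
end
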